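/- arXiv:2305.06974 — 8 statements merged into one kernel-verified Lean document; each statement's English description precedes it below -/
import Mathlib

section
/- For every integer k ≥ 2, the hypergraph H obtained from the complete graph on vertices v_1,…,v_k by adding, for each pair {v_i,v_j} with i < j, a new vertex u_{ij} and taking as edges the sets {v_i, v_j, u_{ij}}, has weak degeneracy at most 1 and strong degeneracy at least k − 1. In particular, the strong degeneracy of a hypergraph can be arbitrarily larger than its weak degeneracy. -/
/-!
Listing the clique vertices first and the pair vertices afterwards shows weak degeneracy at most
`1`: no edge lies inside a prefix ending at a clique vertex, and a pair vertex `u_{ij}` lies in a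
single edge. For the strong degeneracy, look at the last clique vertex `v_a` of any ordering. All
clique vertices precede it, so for each `b ≠ a` the trace of `{v_a, v_b, u_{ab}}` contains both
`v_a` and `v_b`, and these `k - 1` traces are distinct because an edge contains only two clique
vertices.
-/

/-- The vertex set of the separating example: `k` clique vertices `v_1,…,v_k`
(`Sum.inl`) together with one new vertex `u_{ij}` for each pair `i < j`
(`Sum.inr`). -/
abbrev SepVert (k : ℕ) := Fin k ⊕ {p : Fin k × Fin k // p.1 < p.2}

/-- The edges of the separating example: for each pair `i < j`, the edge
`{v_i, v_j, u_{ij}}` of size `3`. -/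
def sepEdges (k : ℕ) : Finset (Finset (SepVert k)) :=
  Finset.univ.image (fun p : {p : Fin k × Fin k // p.1 < p.2} =>
    ({Sum.inl p.1.1, Sum.inl p.1.2, Sum.inr p} : Finset (SepVert k)))

open Finset

section Ordering

variable {α β : Type*}

lemma exists_bijective_inl_lt_inr [Fintype α] [Fintype β] :
    ∃ v : Fin (Fintype.card (α ⊕ β)) → α ⊕ β, Function.Bijective v ∧
      ∀ i j a b, v i = Sum.inl a → v j = Sum.inr b → i < j := by
  let e : α ⊕ β ≃ Fin (Fintype.card α + Fintype.card β) :=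
    (Equiv.sumCongr (Fintype.equivFin α) (Fintype.equivFin β)).trans finSumFinEquiv
  let v : Fin (Fintype.card (α ⊕ β)) → α ⊕ β := e.symm ∘ finCongr Fintype.card_sum
  refine ⟨v, e.symm.bijective.comp (finCongr _).bijective, fun i j a b hi hj => ?_⟩
  have hi' : (e (v i) : ℕ) = Fintype.equivFin α a := by simp [hi, e]
  have hj' : (e (v j) : ℕ) = Fintype.card α + Fintype.equivFin β b := by simp [hj, e]
  simp only [v, Function.comp_apply, Equiv.apply_symm_apply, finCongr_apply, Fin.val_cast]
    at hi' hj'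
  rw [Fin.lt_def]
  omega

lemma exists_inl_forall_inl_mem_image_Iic [Fintype α] [Nonempty α] [DecidableEq α]
    [DecidableEq β] {n : ℕ} {v : Fin n → α ⊕ β} (hv : Function.Bijective v) :
    ∃ i a, v i = Sum.inl a ∧ ∀ b, Sum.inl b ∈ (Iic i).image v := by
  let e := Equiv.ofBijective v hv
  obtain ⟨a, -, ha⟩ := exists_max_image univ (fun a => e.symm (Sum.inl a)) univ_nonempty
  refine ⟨e.symm (Sum.inl a), a, e.apply_symm_apply _, fun b => ?_⟩
  exact mem_image.mpr
    ⟨e.symm (Sum.inl b), mem_Iic.mpr (ha b (mem_univ b)), e.apply_symm_apply _⟩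

end Ordering

def traceEdges {α : Type*} [DecidableEq α] (E : Finset (Finset α)) (S : Finset α) :
    Finset (Finset α) :=
  (E.filter fun e => (e ∩ S).Nonempty).image (· ∩ S)

section SeparatingExample

variable {k : ℕ}

def sepEdge (p : {p : Fin k × Fin k // p.1 < p.2}) : Finset (SepVert k) :=
  {Sum.inl p.1.1, Sum.inl p.1.2, Sum.inr p}

lemma mem_sepEdges {e : Finset (SepVert k)} : e ∈ sepEdges k ↔ ∃ p, sepEdge p = e := by
  simp [sepEdges, sepEdge]

lemma inl_mem_sepEdge {a : Fin k} {p : {p : Fin k × Fin k // p.1 < p.2}} :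
    Sum.inl a ∈ sepEdge p ↔ a = p.1.1 ∨ a = p.1.2 := by
  simp [sepEdge]

lemma inr_mem_sepEdge {p q : {p : Fin k × Fin k // p.1 < p.2}} :
    Sum.inr q ∈ sepEdge p ↔ q = p := by
  simp [sepEdge]

lemma exists_inl_mem_sepEdge_inl_mem {a b : Fin k} (hab : a ≠ b) :
    ∃ p, Sum.inl a ∈ sepEdge p ∧ Sum.inl b ∈ sepEdge p := by
  rcases hab.lt_or_gt with h | h
  · exact ⟨⟨(a, b), h⟩, by simp [inl_mem_sepEdge]⟩
  · exact ⟨⟨(b, a), h⟩, by simp [inl_mem_sepEdge]⟩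

lemma eq_of_inl_mem_sepEdge {a b c : Fin k} {p : {p : Fin k × Fin k // p.1 < p.2}}
    (ha : Sum.inl a ∈ sepEdge p) (hb : Sum.inl b ∈ sepEdge p) (hc : Sum.inl c ∈ sepEdge p)
    (hba : b ≠ a) (hca : c ≠ a) : b = c := by
  have hp := p.2.ne
  simp only [inl_mem_sepEdge] at ha hb hc
  grind

lemma card_filter_sepEdges_subset_le_one {n : ℕ} {v : Fin n → SepVert k}
    (hv : ∀ i j a p, v i = Sum.inl a → v j = Sum.inr p → i < j) (i : Fin n) :
    ((sepEdges k).filter (fun e => e ⊆ (Iic i).image v ∧ v i ∈ e)).card ≤ 1 := by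
  rcases hvi : v i with a | p
  · have hnone : ∀ e ∈ sepEdges k, ¬(e ⊆ (Iic i).image v ∧ Sum.inl a ∈ e) := by
      rintro e he ⟨hsub, -⟩
      obtain ⟨p, rfl⟩ := mem_sepEdges.mp he
      obtain ⟨j, hj, hvj⟩ := mem_image.mp (hsub (inr_mem_sepEdge.mpr rfl))
      exact (mem_Iic.mp hj).not_gt (hv i j a p hvi hvj)
    simp [filter_false_of_mem hnone]
  · refine card_le_one.mpr fun e he e' he' => ?_
    obtain ⟨⟨q, rfl⟩, -, hq⟩ := And.imp_left mem_sepEdges.mp (mem_filter.mp he)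
    obtain ⟨⟨q', rfl⟩, -, hq'⟩ := And.imp_left mem_sepEdges.mp (mem_filter.mp he')
    rw [← inr_mem_sepEdge.mp hq, ← inr_mem_sepEdge.mp hq']

lemma le_card_filter_traceEdges_sepEdges {P : Finset (SepVert k)} (hP : ∀ b, Sum.inl b ∈ P)
    (a : Fin k) : k - 1 ≤ ((traceEdges (sepEdges k) P).filter (Sum.inl a ∈ ·)).card := by
  calc k - 1 = (univ.erase a).card := by simp
    _ ≤ _ := card_le_card_of_forall_subsingleton (fun b t => Sum.inl b ∈ t) ?_ ?_
  · intro b hb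
    obtain ⟨p, hap, hbp⟩ := exists_inl_mem_sepEdge_inl_mem (ne_of_mem_erase hb).symm
    have hat : Sum.inl a ∈ sepEdge p ∩ P := mem_inter.mpr ⟨hap, hP a⟩
    refine ⟨sepEdge p ∩ P, ?_, mem_inter.mpr ⟨hbp, hP b⟩⟩
    simp only [traceEdges, mem_filter, mem_image]
    exact ⟨⟨sepEdge p, ⟨mem_sepEdges.mpr ⟨p, rfl⟩, _, hat⟩, rfl⟩, hat⟩
  · intro t ht b hb c hc
    simp only [traceEdges, mem_filter, mem_image] at ht
    obtain ⟨⟨e, ⟨he, -⟩, rfl⟩, hat⟩ := ht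
    obtain ⟨p, rfl⟩ := mem_sepEdges.mp he
    exact eq_of_inl_mem_sepEdge (mem_inter.mp hat).1 (mem_inter.mp hb.2).1 (mem_inter.mp hc.2).1
      (ne_of_mem_erase hb.1) (ne_of_mem_erase hc.1)

end SeparatingExample

/-- For every `k ≥ 2`, the hypergraph obtained from the complete graph on `v_1,…,v_k`
by adding a new vertex `u_{ij}` inside each edge (so all hyperedges are
`{v_i, v_j, u_{ij}}` with `i < j`) has weak degeneracy at most `1`
(witnessed by some ordering, measuring degrees in induced subhypergraphs)
and strong degeneracy at least `k - 1` (for every ordering, some vertex has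
degree at least `k - 1` in the trace on the vertices up to it). -/
theorem weak_one_strong_ge
    (k : ℕ) (hk : 2 ≤ k) :
    (∃ v : Fin (Fintype.card (SepVert k)) → SepVert k, Function.Bijective v ∧
      ∀ i, ((sepEdges k).filter
          (fun e => e ⊆ (Finset.Iic i).image v ∧ v i ∈ e)).card ≤ 1) ∧
    (∀ v : Fin (Fintype.card (SepVert k)) → SepVert k, Function.Bijective v →
      ∃ i, k - 1 ≤
        ((((sepEdges k).filter
              (fun e => (e ∩ (Finset.Iic i).image v).Nonempty)).image
            (fun e => e ∩ (Finset.Iic i).image v)).filter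
          (fun e => v i ∈ e)).card) := by
  refine ⟨?_, fun v hv => ?_⟩
  · exact exists_bijective_inl_lt_inr.imp fun v ⟨hv, hlt⟩ =>
      ⟨hv, card_filter_sepEdges_subset_le_one hlt⟩
  · have : Nonempty (Fin k) := ⟨⟨0, by omega⟩⟩
    obtain ⟨i, a, hvi, hP⟩ := exists_inl_forall_inl_mem_image_Iic hv
    exact ⟨i, hvi ▸ le_card_filter_traceEdges_sepEdges hP a⟩
end

section
/- Let H be a hypergraph with an ordering v_1,…,v_n of its vertices, let i ∈ {0,…,n−1}, and let T* be a minimal transversal of H_i. If some edge of H_{i+1} is disjoint from T*, then T* ∪ {v_{i+1}} is a minimal transversal of H_{i+1}. -/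
/-- `T` is a transversal of the induced hypergraph `H[S]`, where the ambient
hypergraph has edge family `E`: `T ⊆ S` and `T` meets every edge of `E` that is
contained in `S`. -/
def IsTransversal {α : Type*} [DecidableEq α]
    (E : Finset (Finset α)) (S T : Finset α) : Prop :=
  T ⊆ S ∧ ∀ e ∈ E, e ⊆ S → (e ∩ T).Nonempty

/-- `T` is a minimal transversal of `H[S]`: it is a transversal and no proper
subset of it is a transversal. -/
def IsMinTransversal {α : Type*} [DecidableEq α]
    (E : Finset (Finset α)) (S T : Finset α) : Prop :=
  IsTransversal E S T ∧ ∀ T' ⊂ T, ¬ IsTransversal E S T'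

/-- Let `H` be a hypergraph with an ordering `v 0, …, v (n-1)` of its vertices, let
`i ∈ {0,…,n-1}`, and let `T*` be a minimal transversal of `H_i = H[{v 0,…,v (i-1)}]`.
If some edge of `H_{i+1} = H[{v 0,…,v i}]` is disjoint from `T*`, then
`T* ∪ {v i}` is a minimal transversal of `H_{i+1}`. -/
theorem minTransversal_extends_insert
    {α : Type*} [DecidableEq α] {n : ℕ} (V : Finset α) (E : Finset (Finset α))
    (hE : ∀ e ∈ E, e ⊆ V)
    (v : Fin n → α) (hinj : Function.Injective v) (hV : V = Finset.univ.image v)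
    (i : Fin n) (Tstar : Finset α)
    (hT : IsMinTransversal E ((Finset.Iio i).image v) Tstar)
    (hmiss : ∃ e ∈ E, e ⊆ (Finset.Iic i).image v ∧ e ∩ Tstar = ∅) :
    IsMinTransversal E ((Finset.Iic i).image v) (insert (v i) Tstar) := by
  obtain ⟨⟨hTsub, hThit⟩, hTmin⟩ := hT
  obtain ⟨e₀, he₀E, he₀sub, he₀dis⟩ := hmiss
  have hvi_notin_Iio : v i ∉ (Finset.Iio i).image v := by
    intro h
    obtain ⟨j, hj, hjv⟩ := Finset.mem_image.mp h
    exact absurd (hinj hjv) (Finset.mem_Iio.mp hj).ne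
  have hvi_notin_T : v i ∉ Tstar := fun h => hvi_notin_Iio (hTsub h)
  have hIio_sub : (Finset.Iio i).image v ⊆ (Finset.Iic i).image v :=
    Finset.image_subset_image (Finset.Iio_subset_Iic_self)
  -- edges in Iic not containing v i are in Iio
  have hsplit : ∀ e : Finset α, e ⊆ (Finset.Iic i).image v → v i ∉ e →
      e ⊆ (Finset.Iio i).image v := by
    intro e he hvi x hx
    obtain ⟨j, hj, hjv⟩ := Finset.mem_image.mp (he hx)
    rcases lt_or_eq_of_le (Finset.mem_Iic.mp hj) with hlt | heq
    · exact Finset.mem_image.mpr ⟨j, Finset.mem_Iio.mpr hlt, hjv⟩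
    · exact absurd (heq ▸ hjv ▸ hx) hvi
  constructor
  · constructor
    · exact Finset.insert_subset (Finset.mem_image.mpr ⟨i, Finset.mem_Iic.mpr le_rfl, rfl⟩)
        (hTsub.trans hIio_sub)
    · intro e heE hesub
      by_cases hvi : v i ∈ e
      · exact ⟨v i, Finset.mem_inter.mpr ⟨hvi, Finset.mem_insert_self _ _⟩⟩
      · obtain ⟨x, hx⟩ := hThit e heE (hsplit e hesub hvi)
        rw [Finset.mem_inter] at hx
        exact ⟨x, Finset.mem_inter.mpr ⟨hx.1, Finset.mem_insert_of_mem hx.2⟩⟩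
  · intro T' hT' ⟨hT'sub, hT'hit⟩
    by_cases hviT' : v i ∈ T'
    · -- then T' \ {v i} is a proper subset of Tstar that is a transversal of H_i
      set T'' := T' \ {v i} with hT''
      have hT''sub : T'' ⊂ Tstar := by
        constructor
        · intro x hx
          rw [hT'', Finset.mem_sdiff, Finset.mem_singleton] at hx
          rcases Finset.mem_insert.mp (hT'.subset hx.1) with h | h
          · exact absurd h hx.2
          · exact h
        · intro hsub
          apply hT'.not_subset
          intro x hx
          rcases Finset.mem_insert.mp hx with h | h
          · exact h ▸ hviT'
          · exact (Finset.mem_sdiff.mp (hsub h)).1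
      refine hTmin T'' hT''sub ⟨hT''sub.subset.trans hTsub, ?_⟩
      intro e heE hesub
      obtain ⟨x, hx⟩ := hT'hit e heE (hesub.trans hIio_sub)
      rw [Finset.mem_inter] at hx
      refine ⟨x, Finset.mem_inter.mpr ⟨hx.1, Finset.mem_sdiff.mpr ⟨hx.2, ?_⟩⟩⟩
      rw [Finset.mem_singleton]
      intro heq
      exact hvi_notin_Iio (heq ▸ hesub hx.1)
    · -- T' ⊆ Tstar, but e₀ misses Tstar and v i, so T' misses e₀
      have hT'T : T' ⊆ Tstar := fun x hx => by
        rcases Finset.mem_insert.mp (hT'.subset hx) with h | h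
        · exact absurd (h ▸ hx) hviT'
        · exact h
      obtain ⟨x, hx⟩ := hT'hit e₀ he₀E he₀sub
      rw [Finset.mem_inter] at hx
      have : x ∈ e₀ ∩ Tstar := Finset.mem_inter.mpr ⟨hx.1, hT'T hx.2⟩
      rw [he₀dis] at this
      exact absurd this (Finset.notMem_empty x)
end

section
/- Let H be a hypergraph with an ordering v_1,…,v_n of its vertices, let i ∈ {0,…,n−1}, and let T* be a minimal transversal of H_i. Combining the two cases: either T* is a minimal transversal of H_{i+1}, or T* ∪ {v_{i+1}} is a minimal transversal of H_{i+1}. In particular, every minimal transversal of H_i extends to a minimal transversal of H_{i+1} by adding at most the vertex v_{i+1}. -/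
/-!
Adding the vertex `x = v i` only adds edges through `x`. If `T*` still meets all of them it stays a
minimal transversal. Otherwise some new edge `e` misses `T*`; then `T* ∪ {x}` is a transversal, and a
transversal strictly inside it either avoids `x`, so lies in `T*` and misses `e`, or contains `x`, and
then removing `x` leaves a transversal of the old hypergraph strictly inside `T*`.
-/

namespace IsTransversal

variable {α : Type*} [DecidableEq α] {E : Finset (Finset α)} {S S' T : Finset α} {x : α}

theorem of_superset (h : IsTransversal E S' T) (hT : T ⊆ S) (hS : S ⊆ S') :
    IsTransversal E S T :=
  ⟨hT, fun e he heS => h.2 e he (heS.trans hS)⟩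

protected theorem insert (h : IsTransversal E S T) (x : α) :
    IsTransversal E (insert x S) (insert x T) := by
  refine ⟨Finset.insert_subset_insert x h.1, fun e he heS => ?_⟩
  by_cases hxe : x ∈ e
  · exact ⟨x, Finset.mem_inter.2 ⟨hxe, Finset.mem_insert_self x T⟩⟩
  · obtain ⟨y, hy⟩ := h.2 e he ((Finset.subset_insert_iff_of_notMem hxe).1 heS)
    exact ⟨y, Finset.inter_subset_inter_left (Finset.subset_insert x T) hy⟩

theorem erase_of_notMem (h : IsTransversal E (insert x S) T) (hx : x ∉ S) :
    IsTransversal E S (T.erase x) := by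
  refine ⟨Finset.subset_insert_iff.1 h.1, fun e he heS => ?_⟩
  obtain ⟨y, hy⟩ := h.2 e he (heS.trans (Finset.subset_insert x S))
  obtain ⟨hye, hyT⟩ := Finset.mem_inter.1 hy
  have hyx : y ≠ x := fun hyx => hx (hyx ▸ heS hye)
  exact ⟨y, Finset.mem_inter.2 ⟨hye, Finset.mem_erase.2 ⟨hyx, hyT⟩⟩⟩

end IsTransversal

namespace IsMinTransversal

variable {α : Type*} [DecidableEq α] {E : Finset (Finset α)} {S S' T : Finset α} {x : α}

theorem of_superset (h : IsMinTransversal E S T) (hS : S ⊆ S') (hT : IsTransversal E S' T) :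
    IsMinTransversal E S' T :=
  ⟨hT, fun T' hT' hT'S' => h.2 T' hT' (hT'S'.of_superset (hT'.subset.trans h.1.1) hS)⟩

theorem insert_of_not_isTransversal (h : IsMinTransversal E S T)
    (hT : ¬ IsTransversal E (insert x S) T) : IsMinTransversal E (insert x S) (insert x T) := by
  obtain ⟨e, he, heS, heT⟩ : ∃ e ∈ E, e ⊆ insert x S ∧ ¬ (e ∩ T).Nonempty := by
    simpa [IsTransversal, h.1.1.trans (Finset.subset_insert x S)] using hT
  have hxS : x ∉ S := fun hxS => hT (by rw [Finset.insert_eq_of_mem hxS]; exact h.1)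
  refine ⟨h.1.insert x, fun T' hT' hT'tr => ?_⟩
  by_cases hxT' : x ∈ T'
  · have hsub : T'.erase x ⊂ T := ⟨Finset.subset_insert_iff.1 hT'.subset, fun hle =>
      hT'.not_subset (Finset.insert_subset hxT' (hle.trans (Finset.erase_subset x T')))⟩
    exact h.2 _ hsub (hT'tr.erase_of_notMem hxS)
  · have hT'T : T' ⊆ T := (Finset.subset_insert_iff_of_notMem hxT').1 hT'.subset
    exact heT ((hT'tr.2 e he heS).mono (Finset.inter_subset_inter_left hT'T))

theorem or_insert (h : IsMinTransversal E S T) (x : α) :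
    IsMinTransversal E (insert x S) T ∨ IsMinTransversal E (insert x S) (insert x T) := by
  by_cases hT : IsTransversal E (insert x S) T
  · exact Or.inl (h.of_superset (Finset.subset_insert x S) hT)
  · exact Or.inr (h.insert_of_not_isTransversal hT)

end IsMinTransversal

theorem minTransversal_extends_general
    {α : Type*} [DecidableEq α] {n : ℕ} (E : Finset (Finset α))
    (v : Fin n → α)
    (i : Fin n) (Tstar : Finset α)
    (hT : IsMinTransversal E ((Finset.Iio i).image v) Tstar) :
    IsMinTransversal E ((Finset.Iic i).image v) Tstar ∨
      IsMinTransversal E ((Finset.Iic i).image v) (insert (v i) Tstar) := by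
  rw [← Finset.Iio_insert, Finset.image_insert]
  exact hT.or_insert (v i)

/-- Let `H` be a hypergraph with an ordering `v 0, …, v (n-1)` of its vertices, let
`i ∈ {0,…,n-1}`, and let `T*` be a minimal transversal of `H_i = H[{v 0,…,v (i-1)}]`.
Then either `T*` is a minimal transversal of `H_{i+1} = H[{v 0,…,v i}]`, or
`T* ∪ {v i}` is a minimal transversal of `H_{i+1}`; in particular every minimal
transversal of `H_i` extends to one of `H_{i+1}` by adding at most the vertex `v i`. -/
theorem minTransversal_extends
    {α : Type*} [DecidableEq α] {n : ℕ} (V : Finset α) (E : Finset (Finset α))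
    (hE : ∀ e ∈ E, e ⊆ V)
    (v : Fin n → α) (hinj : Function.Injective v) (hV : V = Finset.univ.image v)
    (i : Fin n) (Tstar : Finset α)
    (hT : IsMinTransversal E ((Finset.Iio i).image v) Tstar) :
    IsMinTransversal E ((Finset.Iic i).image v) Tstar ∨
      IsMinTransversal E ((Finset.Iic i).image v) (insert (v i) Tstar) :=
  minTransversal_extends_general E v i Tstar hT
end

section
/- Let H be a hypergraph with an ordering v_1,…,v_n of its vertices, let i ∈ {0,…,n−1}, let T* be a minimal transversal of H_i, and let X ⊆ V_{i+1} \ T* be such that T* ∪ X is a minimal transversal of H_{i+1}. Then every x ∈ X has a private edge E with respect to T* ∪ X in H_{i+1} such that v_{i+1} ∈ E; in particular every x ∈ X has a private edge belonging to inc_{i+1}(v_{i+1}). -/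
/-! Deleting `x` from a minimal transversal `T* ∪ X` of `H_{i+1}` leaves an edge of `H_{i+1}`
unhit, so that edge meets `T* ∪ X` exactly in `x`. Since `x ∉ T*`, the edge misses `T*`; as `T*`
hits every edge of `H_i`, the edge is not contained in `V_i`, so it must contain `v_{i+1}`. -/

section Transversal

variable {α : Type*} [DecidableEq α] {E : Finset (Finset α)} {S T : Finset α}

theorem IsTransversal.not_subset_of_disjoint (hT : IsTransversal E S T) {e : Finset α}
    (he : e ∈ E) (hdisj : Disjoint e T) : ¬ e ⊆ S := fun heS =>
  (hT.2 e he heS).ne_empty (Finset.disjoint_iff_inter_eq_empty.1 hdisj)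

theorem IsMinTransversal.exists_private_edge (hT : IsMinTransversal E S T) {x : α}
    (hx : x ∈ T) : ∃ e ∈ E, e ⊆ S ∧ e ∩ T = {x} := by
  have hnot := hT.2 _ (Finset.erase_ssubset hx)
  simp only [IsTransversal, (Finset.erase_subset x T).trans hT.1.1, true_and, not_forall,
    Finset.not_nonempty_iff_eq_empty, Finset.inter_erase, Finset.erase_eq_empty_iff] at hnot
  obtain ⟨e, he, heS, hempty | hsingle⟩ := hnot
  · exact absurd hempty (hT.1.2 e he heS).ne_empty
  · exact ⟨e, he, heS, hsingle⟩

end Transversal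

theorem private_edge_in_incidence_of_new_vertex_general
    {α : Type*} [DecidableEq α] {n : ℕ} (E : Finset (Finset α))
    (v : Fin n → α)
    (i : Fin n) (Tstar X : Finset α)
    (hT : IsMinTransversal E ((Finset.Iio i).image v) Tstar)
    (hX : X ⊆ (Finset.Iic i).image v \ Tstar)
    (hTX : IsMinTransversal E ((Finset.Iic i).image v) (Tstar ∪ X)) :
    ∀ x ∈ X, ∃ e ∈ E,
      e ⊆ (Finset.Iic i).image v ∧ v i ∈ e ∧ e ∩ (Tstar ∪ X) = {x} := by
  intro x hxX
  have hxT : x ∉ Tstar := (Finset.mem_sdiff.1 (hX hxX)).2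
  obtain ⟨e, heE, heS, hpriv⟩ := hTX.exists_private_edge (Finset.mem_union_right _ hxX)
  refine ⟨e, heE, heS, ?_, hpriv⟩
  have hdisj : Disjoint e Tstar := Finset.disjoint_left.2 fun y hye hyT => by
    have hyx : y = x := Finset.mem_singleton.1
      (hpriv ▸ Finset.mem_inter.2 ⟨hye, Finset.mem_union_left _ hyT⟩)
    exact hxT (hyx ▸ hyT)
  by_contra hvi
  rw [← Finset.Iio_insert, Finset.image_insert, Finset.subset_insert_iff_of_notMem hvi] at heS
  exact hT.1.not_subset_of_disjoint heE hdisj heS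

/-- Let `H` be a hypergraph with an ordering `v 0, …, v (n-1)` of its vertices,
let `i ∈ {0,…,n-1}`, let `T*` be a minimal transversal of `H_i = H[{v 0,…,v (i-1)}]`,
and let `X ⊆ V_{i+1} \ T*` (with `V_{i+1} = {v 0,…,v i}`) be such that `T* ∪ X` is a
minimal transversal of `H_{i+1} = H[V_{i+1}]`. Then every `x ∈ X` has a private
edge `e` with respect to `T* ∪ X` in `H_{i+1}` (an edge `e` of `H_{i+1}` with
`e ∩ (T* ∪ X) = {x}`) that moreover contains `v i`; in particular every `x ∈ X`
has a private edge belonging to `inc_{i+1}(v_{i+1})`. -/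
theorem private_edge_in_incidence_of_new_vertex
    {α : Type*} [DecidableEq α] {n : ℕ} (V : Finset α) (E : Finset (Finset α))
    (hE : ∀ e ∈ E, e ⊆ V)
    (v : Fin n → α) (hinj : Function.Injective v) (hV : V = Finset.univ.image v)
    (i : Fin n) (Tstar X : Finset α)
    (hT : IsMinTransversal E ((Finset.Iio i).image v) Tstar)
    (hX : X ⊆ (Finset.Iic i).image v \ Tstar)
    (hTX : IsMinTransversal E ((Finset.Iic i).image v) (Tstar ∪ X)) :
    ∀ x ∈ X, ∃ e ∈ E,
      e ⊆ (Finset.Iic i).image v ∧ v i ∈ e ∧ e ∩ (Tstar ∪ X) = {x} :=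
  private_edge_in_incidence_of_new_vertex_general E v i Tstar X hT hX hTX
end

section
/- Let H be a hypergraph with an ordering v_1,…,v_n of its vertices, let i ∈ {0,…,n−1}, let T* be a minimal transversal of H_i, and let X ⊆ V_{i+1} \ T* be such that T* ∪ X is a minimal transversal of H_{i+1}. Then X contains at most one vertex per equivalence class of ≡_{i+1}; that is, for any two distinct x, x' ∈ X, the trace of x on inc_{i+1}(v_{i+1}) differs from the trace of x' on inc_{i+1}(v_{i+1}). -/
/-!
Every `x ∈ X` has a private edge `e` of `H_{i+1}`: one with `e ∩ (T* ∪ X) = {x}`, which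
exists by minimality of `T* ∪ X`. Since `x ∉ T*` and `T*` meets every edge of `H_i`, the edge
`e` is not an edge of `H_i`, so it contains `v_{i+1}`. Then `e` lies in the trace of `x` but,
being private to `x`, not in the trace of any other `x' ∈ X`.
-/

section

variable {α : Type*} [DecidableEq α]

theorem IsMinTransversal.exists_inter_eq_singleton {E : Finset (Finset α)} {S T : Finset α}
    (hT : IsMinTransversal E S T) {x : α} (hx : x ∈ T) :
    ∃ e ∈ E, e ⊆ S ∧ e ∩ T = {x} := by
  by_contra! hno
  refine hT.2 (T.erase x) (Finset.erase_ssubset hx)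
    ⟨(Finset.erase_subset x T).trans hT.1.1, fun e he heS => ?_⟩
  rw [Finset.inter_erase, Finset.nonempty_iff_ne_empty, Ne, Finset.erase_eq_empty_iff]
  exact fun h => h.elim (hT.1.2 e he heS).ne_empty (hno e he heS)

theorem Finset.eq_of_inter_eq_singleton {s t : Finset α} {a b : α} (h : s ∩ t = {a})
    (hs : b ∈ s) (ht : b ∈ t) : b = a :=
  Finset.mem_singleton.1 (h ▸ Finset.mem_inter.2 ⟨hs, ht⟩)

theorem Finset.subset_image_Iio_of_subset_image_Iic {ι : Type*} [PartialOrder ι]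
    [LocallyFiniteOrderBot ι] {v : ι → α} {i : ι} {e : Finset α}
    (he : e ⊆ (Finset.Iic i).image v) (hvi : v i ∉ e) : e ⊆ (Finset.Iio i).image v := by
  classical
  rwa [← Finset.Iio_insert, Finset.image_insert, Finset.subset_insert_iff_of_notMem hvi] at he

end

theorem distinct_traces_of_children_extension_general
    {α : Type*} [DecidableEq α] {n : ℕ} (E : Finset (Finset α))
    (v : Fin n → α)
    (i : Fin n) (Tstar X : Finset α)
    (hT : IsMinTransversal E ((Finset.Iio i).image v) Tstar)
    (hX : X ⊆ (Finset.Iic i).image v \ Tstar)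
    (hTX : IsMinTransversal E ((Finset.Iic i).image v) (Tstar ∪ X)) :
    ∀ x ∈ X, ∀ x' ∈ X, x ≠ x' →
      E.filter (fun e => e ⊆ (Finset.Iic i).image v ∧ v i ∈ e ∧ x ∈ e) ≠
        E.filter (fun e => e ⊆ (Finset.Iic i).image v ∧ v i ∈ e ∧ x' ∈ e) := by
  intro x hx x' hx' hne htrace
  obtain ⟨e, he, heS, hex⟩ := hTX.exists_inter_eq_singleton (Finset.mem_union_right Tstar hx)
  have hxe : x ∈ e := (Finset.mem_inter.1 (hex.symm ▸ Finset.mem_singleton_self x)).1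
  have hvi : v i ∈ e := by
    by_contra hvi
    obtain ⟨y, hy⟩ := hT.1.2 e he (Finset.subset_image_Iio_of_subset_image_Iic heS hvi)
    obtain ⟨hye, hyT⟩ := Finset.mem_inter.1 hy
    have hxT : x ∉ Tstar := (Finset.mem_sdiff.1 (hX hx)).2
    exact hxT (Finset.eq_of_inter_eq_singleton hex hye (Finset.mem_union_left X hyT) ▸ hyT)
  have hx'e : x' ∈ e := by
    have he_trace : e ∈ E.filter (fun e => e ⊆ (Finset.Iic i).image v ∧ v i ∈ e ∧ x ∈ e) :=
      Finset.mem_filter.2 ⟨he, heS, hvi, hxe⟩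
    rw [htrace, Finset.mem_filter] at he_trace
    exact he_trace.2.2.2
  exact hne (Finset.eq_of_inter_eq_singleton hex hx'e (Finset.mem_union_right Tstar hx')).symm

/-- Let `H` be a hypergraph with an ordering `v 0, …, v (n-1)` of its vertices,
let `i ∈ {0,…,n-1}`, let `T*` be a minimal transversal of `H_i = H[{v 0,…,v (i-1)}]`,
and let `X ⊆ V_{i+1} \ T*` (with `V_{i+1} = {v 0,…,v i}`) be such that `T* ∪ X` is a
minimal transversal of `H_{i+1} = H[V_{i+1}]`. Then `X` contains at most one vertex
per equivalence class of `≡_{i+1}`: any two distinct `x, x' ∈ X` have different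
traces on `inc_{i+1}(v_{i+1})`, the set of edges of `H_{i+1}` containing `v i`. -/
theorem distinct_traces_of_children_extension
    {α : Type*} [DecidableEq α] {n : ℕ} (V : Finset α) (E : Finset (Finset α))
    (hE : ∀ e ∈ E, e ⊆ V)
    (v : Fin n → α) (hinj : Function.Injective v) (hV : V = Finset.univ.image v)
    (i : Fin n) (Tstar X : Finset α)
    (hT : IsMinTransversal E ((Finset.Iio i).image v) Tstar)
    (hX : X ⊆ (Finset.Iic i).image v \ Tstar)
    (hTX : IsMinTransversal E ((Finset.Iic i).image v) (Tstar ∪ X)) :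
    ∀ x ∈ X, ∀ x' ∈ X, x ≠ x' →
      E.filter (fun e => e ⊆ (Finset.Iic i).image v ∧ v i ∈ e ∧ x ∈ e) ≠
        E.filter (fun e => e ⊆ (Finset.Iic i).image v ∧ v i ∈ e ∧ x' ∈ e) :=
  distinct_traces_of_children_extension_general E v i Tstar X hT hX hTX
end

section
/- Let G be a finite graph and let v_1,…,v_n be an ordering of V(G) such that every v_i has at most d neighbors among v_1,…,v_{i−1}. Then for every i, the number of distinct edges of the hypergraph N(G) that are contained in {v_1,…,v_i} and contain v_i is at most d + 1. Consequently, the weak degeneracy of N(G) is at most the degeneracy of G plus one. -/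
/-- Let `G` be a finite graph and let `v 0, …, v (n-1)` be an ordering of `V(G)` such
that every `v i` has at most `d` neighbors among `v 0, …, v (i-1)`. Then for
every `i`, the number of distinct edges of the hypergraph `N(G)` of closed
neighborhoods that are contained in `{v 0, …, v i}` and contain `v i` is at most
`d + 1`; consequently the same ordering witnesses that the weak degeneracy of
`N(G)` is at most the degeneracy of `G` plus one. -/
theorem weak_degeneracy_closedNeighborhoodHypergraph
    {α : Type*} [Fintype α] [DecidableEq α] (G : SimpleGraph α) [DecidableRel G.Adj]
    {n : ℕ} (v : Fin n → α) (hbij : Function.Bijective v) (d : ℕ)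
    (hdeg : ∀ i : Fin n, (G.neighborFinset (v i) ∩ (Finset.Iio i).image v).card ≤ d) :
    ∀ i : Fin n,
      ((Finset.univ.image (fun u => insert u (G.neighborFinset u))).filter
        (fun e => e ⊆ (Finset.Iic i).image v ∧ v i ∈ e)).card ≤ d + 1 := by
  intro i
  have hsub : ((Finset.univ.image (fun u => insert u (G.neighborFinset u))).filter
        (fun e => e ⊆ (Finset.Iic i).image v ∧ v i ∈ e)) ⊆
      (insert (v i) (G.neighborFinset (v i) ∩ (Finset.Iio i).image v)).image
        (fun u => insert u (G.neighborFinset u)) := by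
    intro e he
    rw [Finset.mem_filter] at he
    obtain ⟨he1, hsubset, hvi⟩ := he
    rw [Finset.mem_image] at he1
    obtain ⟨u, _, rfl⟩ := he1
    rw [Finset.mem_image]
    refine ⟨u, ?_, rfl⟩
    rw [Finset.mem_insert]
    by_cases hu : u = v i
    · exact Or.inl hu
    · right
      rw [Finset.mem_inter]
      constructor
      · rw [SimpleGraph.mem_neighborFinset]
        have : v i ∈ insert u (G.neighborFinset u) := hvi
        rw [Finset.mem_insert, SimpleGraph.mem_neighborFinset] at this
        rcases this with h | h
        · exact absurd h.symm hu
        · exact h.symm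
      · have hu' : u ∈ (Finset.Iic i).image v := hsubset (Finset.mem_insert_self _ _)
        rw [Finset.mem_image] at hu' ⊢
        obtain ⟨j, hj, rfl⟩ := hu'
        refine ⟨j, ?_, rfl⟩
        rw [Finset.mem_Iic] at hj
        rw [Finset.mem_Iio]
        exact lt_of_le_of_ne hj (fun h => hu (congrArg v h))
  calc _ ≤ ((insert (v i) (G.neighborFinset (v i) ∩ (Finset.Iio i).image v)).image
        (fun u => insert u (G.neighborFinset u))).card := Finset.card_le_card hsub
    _ ≤ (insert (v i) (G.neighborFinset (v i) ∩ (Finset.Iio i).image v)).card :=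
        Finset.card_image_le
    _ ≤ (G.neighborFinset (v i) ∩ (Finset.Iio i).image v).card + 1 :=
        Finset.card_insert_le _ _
    _ ≤ d + 1 := by exact Nat.add_le_add_right (hdeg i) 1
end

section
/- Let G be a finite graph, k ≥ 1, and c : V(G) → {1,…,k} a coloring of its vertices. Define a hypergraph H with vertex set V(G) ∪ {u_e : e ∈ E(G)} ∪ {v}, where the u_e and v are new pairwise distinct vertices, and with edges: E_ℓ = c^{−1}(ℓ) ∪ {v} for each ℓ ∈ {1,…,k}, and, for each edge e = xy of G, the two edges A_e = {x, u_e} and B_e = {y, u_e}. Let T* = {u_e : e ∈ E(G)}. Then for every set X ⊆ V(G), the set T* ∪ X is a minimal transversal of H if and only if X is an independent set of G containing exactly one vertex of each color class c^{−1}(ℓ), ℓ ∈ {1,…,k}, i.e., a multicolored independent set of G. -/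
/-- Vertices of the hypergraph of the reduction: the vertices of `G`
(`Sum.inl x`), one vertex `u_e` for each (potential) edge `e` of `G`
(`Sum.inr (Sum.inl e)`), and the extra vertex `v` (`Sum.inr (Sum.inr ())`).
(Only the `u_e` with `e` an actual edge of `G` are vertices of the hypergraph.) -/
abbrev RedVert (α : Type*) := α ⊕ (Sym2 α ⊕ Unit)

/-- The extra vertex `v` of the reduction. -/
def redExtra (α : Type*) : RedVert α := Sum.inr (Sum.inr ())

/-- The edges of the hypergraph of the reduction: for each color `ℓ`, the edge
`E_ℓ = c⁻¹(ℓ) ∪ {v}`, and for each edge `e = xy` of `G`, the two edges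
`A_e = {x, u_e}` and `B_e = {y, u_e}`. -/
def redEdges {α : Type*} [Fintype α] [DecidableEq α]
    (G : SimpleGraph α) [DecidableRel G.Adj] (k : ℕ) (c : α → Fin k) :
    Finset (Finset (RedVert α)) :=
  Finset.univ.image (fun ℓ : Fin k =>
      insert (redExtra α)
        ((Finset.univ.filter (fun x => c x = ℓ)).image (Sum.inl : α → RedVert α)))
    ∪ (Finset.univ.filter (fun p : α × α => G.Adj p.1 p.2)).image
        (fun p => ({Sum.inl p.1, Sum.inr (Sum.inl s(p.1, p.2))} : Finset (RedVert α)))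

/-- The set `T* = {u_e : e ∈ E(G)}`. -/
def redTstar {α : Type*} [Fintype α] [DecidableEq α]
    (G : SimpleGraph α) [DecidableRel G.Adj] : Finset (RedVert α) :=
  G.edgeFinset.image (fun e => (Sum.inr (Sum.inl e) : RedVert α))

/-- Let `G` be a finite graph, `k ≥ 1`, and `c : V(G) → {1,…,k}` a coloring of its
vertices.  In the hypergraph `H` of the reduction (vertex set
`V(G) ∪ {u_e : e ∈ E(G)} ∪ {v}`, edges `E_ℓ = c⁻¹(ℓ) ∪ {v}` for each color `ℓ`
and `A_e = {x,u_e}`, `B_e = {y,u_e}` for each edge `e = xy` of `G`), with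
`T* = {u_e : e ∈ E(G)}`, a set `T* ∪ X` with `X ⊆ V(G)` is a minimal transversal
of `H` (it meets every edge and no proper subset does) if and only if `X` is an
independent set of `G` containing exactly one vertex of each color class, i.e.
a multicolored independent set of `G`. -/
theorem redTstar_union_minTransversal_iff_multicoloredIndependent
    {α : Type*} [Fintype α] [DecidableEq α]
    (G : SimpleGraph α) [DecidableRel G.Adj] (k : ℕ) (hk : 1 ≤ k)
    (c : α → Fin k) (X : Finset α) :
    ((∀ e ∈ redEdges G k c,
        (e ∩ (redTstar G ∪ X.image Sum.inl)).Nonempty) ∧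
      ∀ T' ⊂ redTstar G ∪ X.image Sum.inl,
        ¬ ∀ e ∈ redEdges G k c, (e ∩ T').Nonempty) ↔
    ((∀ x ∈ X, ∀ y ∈ X, ¬ G.Adj x y) ∧
      ∀ ℓ : Fin k, ∃! x, x ∈ X ∧ c x = ℓ) := by

  classical
  set T : Finset (RedVert α) := redTstar G ∪ X.image Sum.inl with hT
  have hmemT : ∀ z : RedVert α, z ∈ T ↔
      (∃ e ∈ G.edgeFinset, z = Sum.inr (Sum.inl e)) ∨ ∃ x ∈ X, z = Sum.inl x := by
    intro z
    simp only [hT, redTstar, Finset.mem_union, Finset.mem_image]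
    constructor
    · rintro (⟨e, he, rfl⟩ | ⟨x, hx, rfl⟩)
      · exact Or.inl ⟨e, he, rfl⟩
      · exact Or.inr ⟨x, hx, rfl⟩
    · rintro (⟨e, he, rfl⟩ | ⟨x, hx, rfl⟩)
      · exact Or.inl ⟨e, he, rfl⟩
      · exact Or.inr ⟨x, hx, rfl⟩
  have hv_notT : redExtra α ∉ T := by
    rw [hmemT]; rintro (⟨e, _, h⟩ | ⟨x, _, h⟩) <;> simp [redExtra] at h
  have hmemE : ∀ e : Finset (RedVert α), e ∈ redEdges G k c ↔
      (∃ ℓ : Fin k, e = insert (redExtra α)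
        ((Finset.univ.filter (fun x => c x = ℓ)).image (Sum.inl : α → RedVert α))) ∨
      ∃ p : α × α, G.Adj p.1 p.2 ∧
        e = ({Sum.inl p.1, Sum.inr (Sum.inl s(p.1, p.2))} : Finset (RedVert α)) := by
    intro e
    simp only [redEdges, Finset.mem_union, Finset.mem_image, Finset.mem_filter,
      Finset.mem_univ, true_and]
    constructor
    · rintro (⟨ℓ, _, rfl⟩ | ⟨p, hp, rfl⟩)
      · exact Or.inl ⟨ℓ, rfl⟩
      · exact Or.inr ⟨p, hp, rfl⟩
    · rintro (⟨ℓ, rfl⟩ | ⟨p, hp, rfl⟩)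
      · exact Or.inl ⟨ℓ, rfl⟩
      · exact Or.inr ⟨p, hp, rfl⟩
  have hmemColor : ∀ (ℓ : Fin k) (z : RedVert α),
      z ∈ insert (redExtra α)
        ((Finset.univ.filter (fun x => c x = ℓ)).image (Sum.inl : α → RedVert α)) ↔
      z = redExtra α ∨ ∃ x, c x = ℓ ∧ z = Sum.inl x := by
    intro ℓ z
    simp only [Finset.mem_insert, Finset.mem_image, Finset.mem_filter, Finset.mem_univ, true_and]
    constructor
    · rintro (rfl | ⟨x, hx, rfl⟩)
      · exact Or.inl rfl
      · exact Or.inr ⟨x, hx, rfl⟩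
    · rintro (rfl | ⟨x, hx, rfl⟩)
      · exact Or.inl rfl
      · exact Or.inr ⟨x, hx, rfl⟩
  constructor
  · rintro ⟨htr, hmin⟩
    have hXcol : ∀ ℓ : Fin k, ∃ x, x ∈ X ∧ c x = ℓ := by
      intro ℓ
      obtain ⟨z, hz⟩ := htr _ ((hmemE _).2 (Or.inl ⟨ℓ, rfl⟩))
      rw [Finset.mem_inter, hmemColor] at hz
      obtain ⟨(rfl | ⟨x, hcx, rfl⟩), hzT⟩ := hz
      · exact absurd hzT hv_notT
      · rw [hmemT] at hzT
        rcases hzT with ⟨e, _, h⟩ | ⟨y, hy, h⟩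
        · exact absurd h (by simp)
        · exact ⟨y, hy, (Sum.inl_injective h) ▸ hcx⟩
    constructor
    · -- independence
      intro x hx y hy hadj
      set u : RedVert α := Sum.inr (Sum.inl s(x, y)) with hu
      have hxyE : s(x, y) ∈ G.edgeFinset := by
        simp only [SimpleGraph.mem_edgeFinset]; exact hadj
      have huT : u ∈ T := (hmemT u).2 (Or.inl ⟨s(x, y), hxyE, rfl⟩)
      refine hmin (T.erase u) (Finset.erase_ssubset huT) ?_
      intro e he
      rcases (hmemE e).1 he with ⟨ℓ, rfl⟩ | ⟨p, hp, rfl⟩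
      · obtain ⟨x', hx', hcx'⟩ := hXcol ℓ
        refine ⟨Sum.inl x', Finset.mem_inter.2 ⟨(hmemColor ℓ _).2 (Or.inr ⟨x', hcx', rfl⟩), ?_⟩⟩
        exact Finset.mem_erase.2 ⟨by simp [hu], (hmemT _).2 (Or.inr ⟨x', hx', rfl⟩)⟩
      · by_cases hpe : (Sum.inr (Sum.inl s(p.1, p.2)) : RedVert α) = u
        · have : p.1 = x ∨ p.1 = y := by
            have : s(p.1, p.2) = s(x, y) := by
              simpa [hu] using hpe
            rw [Sym2.eq_iff] at this
            rcases this with ⟨h1, _⟩ | ⟨h1, _⟩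
            · exact Or.inl h1
            · exact Or.inr h1
          have hp1X : p.1 ∈ X := by rcases this with rfl | rfl <;> assumption
          refine ⟨Sum.inl p.1, Finset.mem_inter.2 ⟨by simp, ?_⟩⟩
          exact Finset.mem_erase.2 ⟨by simp [hu], (hmemT _).2 (Or.inr ⟨p.1, hp1X, rfl⟩)⟩
        · refine ⟨Sum.inr (Sum.inl s(p.1, p.2)), Finset.mem_inter.2 ⟨by simp, ?_⟩⟩
          refine Finset.mem_erase.2 ⟨hpe, (hmemT _).2 (Or.inl ⟨s(p.1, p.2), ?_, rfl⟩)⟩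
          simp only [SimpleGraph.mem_edgeFinset]; exact hp
    · -- exactly one per color
      intro ℓ
      obtain ⟨x, hx, hcx⟩ := hXcol ℓ
      refine ⟨x, ⟨hx, hcx⟩, ?_⟩
      rintro y ⟨hy, hcy⟩
      by_contra hne
      have hxT : (Sum.inl x : RedVert α) ∈ T := (hmemT _).2 (Or.inr ⟨x, hx, rfl⟩)
      refine hmin (T.erase (Sum.inl x)) (Finset.erase_ssubset hxT) ?_
      intro e he
      rcases (hmemE e).1 he with ⟨m, rfl⟩ | ⟨p, hp, rfl⟩
      · by_cases hm : m = ℓ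
        · subst hm
          refine ⟨Sum.inl y, Finset.mem_inter.2 ⟨(hmemColor _ _).2 (Or.inr ⟨y, hcy, rfl⟩), ?_⟩⟩
          exact Finset.mem_erase.2 ⟨by simpa using hne, (hmemT _).2 (Or.inr ⟨y, hy, rfl⟩)⟩
        · obtain ⟨x', hx', hcx'⟩ := hXcol m
          have hx'x : x' ≠ x := fun h => hm (by rw [← hcx', h, hcx])
          refine ⟨Sum.inl x', Finset.mem_inter.2 ⟨(hmemColor _ _).2 (Or.inr ⟨x', hcx', rfl⟩), ?_⟩⟩
          exact Finset.mem_erase.2 ⟨by simpa using hx'x, (hmemT _).2 (Or.inr ⟨x', hx', rfl⟩)⟩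
      · refine ⟨Sum.inr (Sum.inl s(p.1, p.2)), Finset.mem_inter.2 ⟨by simp, ?_⟩⟩
        refine Finset.mem_erase.2 ⟨by simp, (hmemT _).2 (Or.inl ⟨s(p.1, p.2), ?_, rfl⟩)⟩
        simp only [SimpleGraph.mem_edgeFinset]; exact hp
  · rintro ⟨hind, hcol⟩
    constructor
    · -- transversal
      intro e he
      rcases (hmemE e).1 he with ⟨ℓ, rfl⟩ | ⟨p, hp, rfl⟩
      · obtain ⟨x, ⟨hx, hcx⟩, _⟩ := hcol ℓ
        exact ⟨Sum.inl x, Finset.mem_inter.2 ⟨(hmemColor _ _).2 (Or.inr ⟨x, hcx, rfl⟩),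
          (hmemT _).2 (Or.inr ⟨x, hx, rfl⟩)⟩⟩
      · refine ⟨Sum.inr (Sum.inl s(p.1, p.2)), Finset.mem_inter.2 ⟨by simp, ?_⟩⟩
        exact (hmemT _).2 (Or.inl ⟨s(p.1, p.2), by simp only [SimpleGraph.mem_edgeFinset]; exact hp, rfl⟩)
    · -- minimality
      intro T' hss hall
      obtain ⟨t, htT, htT'⟩ := Finset.exists_of_ssubset hss
      have hsub : T' ⊆ T := hss.subset
      rcases (hmemT t).1 htT with ⟨e, he, rfl⟩ | ⟨x, hx, rfl⟩
      · induction e using Sym2.ind with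
        | _ a b =>
          have hadj : G.Adj a b := by
            rw [SimpleGraph.mem_edgeFinset] at he
            exact he
          have hnab : a ∉ X ∨ b ∉ X := by
            by_contra h
            push_neg at h
            exact hind a h.1 b h.2 hadj
          rcases hnab with ha | hb
          · obtain ⟨z, hz⟩ := hall _ ((hmemE _).2 (Or.inr ⟨(a, b), hadj, rfl⟩))
            rw [Finset.mem_inter] at hz
            rcases Finset.mem_insert.1 hz.1 with rfl | hz1
            · -- z = Sum.inl a
              rcases (hmemT _).1 (hsub hz.2) with ⟨e', _, h⟩ | ⟨x', hx', h⟩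
              · exact absurd h (by simp)
              · have : x' = a := by simpa using h.symm
                exact ha (this ▸ hx')
            · have : z = Sum.inr (Sum.inl s(a, b)) := by simpa using hz1
              exact htT' (this ▸ hz.2)
          · obtain ⟨z, hz⟩ := hall _ ((hmemE _).2 (Or.inr ⟨(b, a), hadj.symm, rfl⟩))
            rw [Finset.mem_inter] at hz
            rcases Finset.mem_insert.1 hz.1 with rfl | hz1
            · rcases (hmemT _).1 (hsub hz.2) with ⟨e', _, h⟩ | ⟨x', hx', h⟩
              · exact absurd h (by simp)
              · have : x' = b := by simpa using h.symm
                exact hb (this ▸ hx')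
            · have hzz : z = Sum.inr (Sum.inl s(b, a)) := by simpa using hz1
              rw [hzz, Sym2.eq_swap] at hz
              exact htT' hz.2
      · obtain ⟨z, hz⟩ := hall _ ((hmemE _).2 (Or.inl ⟨c x, rfl⟩))
        rw [Finset.mem_inter] at hz
        rcases (hmemColor _ _).1 hz.1 with rfl | ⟨y, hcy, rfl⟩
        · exact hv_notT (hsub hz.2)
        · have hyX : y ∈ X := by
            rcases (hmemT _).1 (hsub hz.2) with ⟨e', _, h⟩ | ⟨x', hx', h⟩
            · exact absurd h (by simp)
            · have : x' = y := by simpa using h.symm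
              exact this ▸ hx'
          obtain ⟨w, _, hwuniq⟩ := hcol (c x)
          have h1 : y = w := hwuniq y ⟨hyX, hcy⟩
          have h2 : x = w := hwuniq x ⟨hx, rfl⟩
          exact htT' ((h1.trans h2.symm) ▸ hz.2)
end

section
/- Let G be a finite graph, k ≥ 2, and c : V(G) → {1,…,k} a coloring of its vertices. Define a hypergraph H with vertex set V(G) ∪ {u_e : e ∈ E(G)} ∪ {v}, where the u_e and v are new pairwise distinct vertices, and with edges: E_ℓ = c^{−1}(ℓ) ∪ {v} for each ℓ ∈ {1,…,k}, and, for each edge e = xy of G, the two edges A_e = {x, u_e} and B_e = {y, u_e}. Then H has weak degeneracy at most k, as witnessed by any ordering that lists the vertices of V(G) first (in any order), then the vertices u_e, and finally v. -/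
/-- The vertex set `V(G) ∪ {u_e : e ∈ E(G)} ∪ {v}` of the reduction hypergraph. -/
def redVertexSet {α : Type*} [Fintype α] [DecidableEq α]
    (G : SimpleGraph α) [DecidableRel G.Adj] : Finset (RedVert α) :=
  Finset.univ.image (Sum.inl : α → RedVert α)
    ∪ G.edgeFinset.image (fun e => (Sum.inr (Sum.inl e) : RedVert α))
    ∪ {redExtra α}

/-- The rank of a vertex of the reduction hypergraph: vertices of `G` come
first, then the vertices `u_e`, and finally the extra vertex `v`. -/
def redRank {α : Type*} : RedVert α → ℕ
  | Sum.inl _ => 0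
  | Sum.inr (Sum.inl _) => 1
  | Sum.inr (Sum.inr _) => 2

/-- Let `G` be a finite graph, `k ≥ 2`, and `c : V(G) → {1,…,k}` a coloring of its
vertices.  The hypergraph `H` of the reduction (vertex set
`V(G) ∪ {u_e : e ∈ E(G)} ∪ {v}`, edges `E_ℓ = c⁻¹(ℓ) ∪ {v}` for each color `ℓ`
and `A_e = {x,u_e}`, `B_e = {y,u_e}` for each edge `e = xy` of `G`) has weak
degeneracy at most `k`, as witnessed by any ordering of its vertex set listing
the vertices of `V(G)` first (in any order), then the vertices `u_e`, then `v`: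
along any such ordering, each vertex has degree at most `k` in the subhypergraph
induced by it and the preceding vertices. -/
theorem redEdges_weak_degeneracy_le
    {α : Type*} [Fintype α] [DecidableEq α]
    (G : SimpleGraph α) [DecidableRel G.Adj] (k : ℕ) (hk : 2 ≤ k)
    (c : α → Fin k) {n : ℕ} (v : Fin n → RedVert α)
    (hinj : Function.Injective v)
    (himg : Finset.univ.image v = redVertexSet G)
    (hord : ∀ i j : Fin n, i ≤ j → redRank (v i) ≤ redRank (v j)) :
    ∀ i : Fin n,
      ((redEdges G k c).filter
        (fun e => e ⊆ (Finset.Iic i).image v ∧ v i ∈ e)).card ≤ k := by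

  intro i
  have key : ∀ w ∈ (Finset.Iic i).image v, redRank w ≤ redRank (v i) := by
    intro w hw
    obtain ⟨j, hj, rfl⟩ := Finset.mem_image.1 hw
    exact hord j i (Finset.mem_Iic.1 hj)
  rcases hvi : v i with x | e | u <;> rw [← hvi]
  · -- v i is a vertex of G : no edge qualifies
    have hempty : (redEdges G k c).filter
        (fun e => e ⊆ (Finset.Iic i).image v ∧ v i ∈ e) = ∅ := by
      rw [Finset.filter_eq_empty_iff]
      rintro E hE ⟨hsub, -⟩
      rcases Finset.mem_union.1 hE with h1 | h2
      · obtain ⟨ℓ, -, rfl⟩ := Finset.mem_image.1 h1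
        have : redRank (redExtra α) ≤ redRank (v i) :=
          key _ (hsub (Finset.mem_insert_self _ _))
        rw [hvi] at this
        simp [redExtra, redRank] at this
      · obtain ⟨p, -, rfl⟩ := Finset.mem_image.1 h2
        have : redRank (Sum.inr (Sum.inl s(p.1, p.2)) : RedVert α) ≤ redRank (v i) :=
          key _ (hsub (by simp))
        rw [hvi] at this
        simp [redRank] at this
    rw [hempty]
    simp
  · -- v i is a u_e vertex
    revert hvi
    induction e using Sym2.ind with
    | _ x y =>
      intro hvi
      have hsub : (redEdges G k c).filter
          (fun e => e ⊆ (Finset.Iic i).image v ∧ v i ∈ e) ⊆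
          {({Sum.inl x, Sum.inr (Sum.inl s(x, y))} : Finset (RedVert α)),
           ({Sum.inl y, Sum.inr (Sum.inl s(x, y))} : Finset (RedVert α))} := by
        intro E hE
        obtain ⟨hE, -, hmem⟩ := Finset.mem_filter.1 hE
        rw [hvi] at hmem
        rcases Finset.mem_union.1 hE with h1 | h2
        · exfalso
          obtain ⟨ℓ, -, rfl⟩ := Finset.mem_image.1 h1
          rcases Finset.mem_insert.1 hmem with h | h
          · simp [redExtra] at h
          · obtain ⟨a, -, ha⟩ := Finset.mem_image.1 h
            simp at ha
        · obtain ⟨⟨p1, p2⟩, -, rfl⟩ := Finset.mem_image.1 h2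
          simp only [Finset.mem_insert, Finset.mem_singleton] at hmem
          rcases hmem with h | h
          · simp at h
          · have he : s(x, y) = s(p1, p2) := Sum.inl.inj (Sum.inr.inj h)
            rcases Sym2.eq_iff.1 he with ⟨rfl, rfl⟩ | ⟨rfl, rfl⟩
            · simp
            · simp [Sym2.eq_swap]
      calc _ ≤ _ := Finset.card_le_card hsub
        _ ≤ 2 := Finset.card_le_two ..
        _ ≤ k := hk
  · -- v i is the extra vertex
    have hsub : (redEdges G k c).filter
        (fun e => e ⊆ (Finset.Iic i).image v ∧ v i ∈ e) ⊆
        Finset.univ.image (fun ℓ : Fin k =>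
          insert (redExtra α)
            ((Finset.univ.filter (fun x => c x = ℓ)).image (Sum.inl : α → RedVert α))) := by
      intro E hE
      obtain ⟨hE, -, hmem⟩ := Finset.mem_filter.1 hE
      rw [hvi] at hmem
      rcases Finset.mem_union.1 hE with h1 | h2
      · exact h1
      · exfalso
        obtain ⟨p, -, rfl⟩ := Finset.mem_image.1 h2
        simp only [Finset.mem_insert, Finset.mem_singleton] at hmem
        rcases hmem with h | h <;> simp at h
    calc _ ≤ _ := Finset.card_le_card hsub
      _ ≤ (Finset.univ : Finset (Fin k)).card := Finset.card_image_le
      _ = k := by simp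
end
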